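/- arXiv:1411.2438 — 2 statements merged into one kernel-verified Lean document; each statement's English description precedes it below -/
import Mathlib

section
/- In the DAG-width cops-and-robber game on a digraph G with n vertices, if the cops have a winning strategy with k cops, then they have a winning strategy in which the set of vertices unavailable to the robber strictly grows in every round; consequently every play consistent with such a strategy has length at most 2n rounds. -/
/-- Reachability in the digraph `Adj` by directed paths avoiding the vertex set `X`. -/
def ReachAvoid {V : Type} (Adj : V → V → Prop) (X : Set V) : V → V → Prop :=
  Relation.ReflTransGen (fun x y => Adj x y ∧ x ∉ X ∧ y ∉ X)

/-- `R` is a strongly connected component of the digraph `G − C`. -/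
def IsComponent {V : Type} (Adj : V → V → Prop) (C R : Set V) : Prop :=
  R.Nonempty ∧ Disjoint R C ∧
    (∀ u ∈ R, ∀ v ∈ R, ReachAvoid Adj C u v) ∧
    (∀ v : V, v ∉ C → (∃ u ∈ R, ReachAvoid Adj C u v ∧ ReachAvoid Adj C v u) → v ∈ R)

/-- From position `(C, R)`, after the cops announce `C'`, the robber may move to
any component `R'` of `G − C'` contained in `Reach_{G − (C ∩ C')}(R)`. -/
def LegalRobberMove {V : Type} (Adj : V → V → Prop) (C R C' R' : Set V) : Prop :=
  IsComponent Adj C' R' ∧ ∀ v ∈ R', ∃ u ∈ R, ReachAvoid Adj (C ∩ C') u v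

/-- The set of vertices available to a robber in component `R` when cops are on `C`. -/
def Avail {V : Type} (Adj : V → V → Prop) (C R : Set V) : Set V :=
  {v : V | ∃ u ∈ R, ReachAvoid Adj C u v}

/-- The first `m` rounds of the play `p` (a sequence of positions `(Cᵢ, Rᵢ)`) are
consistent with the (memoryless) cop strategy `σ`: the play starts at `(∅, R₀)`
with `R₀` a component of `G`, the cops move according to `σ` and the robber's
moves are legal. -/
def ConsistentPrefix {V : Type} (Adj : V → V → Prop)
    (σ : Set V → Set V → Set V) (p : ℕ → Set V × Set V) (m : ℕ) : Prop :=
  (p 0).1 = ∅ ∧ IsComponent Adj ∅ (p 0).2 ∧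
    ∀ i, i < m → (p (i + 1)).1 = σ (p i).1 (p i).2 ∧
      LegalRobberMove Adj (p i).1 (p i).2 (p (i + 1)).1 (p (i + 1)).2

/-- Round `i` of the play `p` is robber-monotone: the set of vertices available
to the robber does not grow (no previously unavailable vertex becomes reachable). -/
def MonotoneStep {V : Type} (Adj : V → V → Prop) (p : ℕ → Set V × Set V) (i : ℕ) : Prop :=
  Avail Adj (p (i + 1)).1 (p (i + 1)).2 ⊆ Avail Adj (p i).1 (p i).2

/-- `σ` is a winning strategy for `k` cops: it uses at most `k` cops, every
consistent play is finite (i.e. the robber eventually has no legal move and is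
captured), and every consistent play is robber-monotone. -/
def WinningCopStrategy {V : Type} (Adj : V → V → Prop) (k : ℕ)
    (σ : Set V → Set V → Set V) : Prop :=
  (∀ C R : Set V, (σ C R).ncard ≤ k) ∧
  (¬ ∃ p : ℕ → Set V × Set V, ∀ m, ConsistentPrefix Adj σ p m) ∧
  (∀ p m, ConsistentPrefix Adj σ p m → ∀ i, i < m → MonotoneStep Adj p i)


namespace ShrinkAux

attribute [local instance] Classical.propDecidable

variable {V : Type}

/-! ### Basic lemmas about `ReachAvoid` and `Avail` -/

lemma reachAvoid_mono {Adj : V → V → Prop} {X Y : Set V} (hYX : Y ⊆ X) {u v : V}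
    (h : ReachAvoid Adj X u v) : ReachAvoid Adj Y u v :=
  Relation.ReflTransGen.mono (p := fun x y => Adj x y ∧ x ∉ Y ∧ y ∉ Y)
    (fun _ _ hab => ⟨hab.1, fun ha => hab.2.1 (hYX ha), fun hb => hab.2.2 (hYX hb)⟩) _ _ h

lemma mem_avail {Adj : V → V → Prop} {C R : Set V} {u : V} (hu : u ∈ R) :
    u ∈ Avail Adj C R :=
  ⟨u, hu, Relation.ReflTransGen.refl⟩

lemma avail_trans {Adj : V → V → Prop} {C R : Set V} {v w : V}
    (hv : v ∈ Avail Adj C R) (h : ReachAvoid Adj C v w) : w ∈ Avail Adj C R := by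
  obtain ⟨u, hu, huv⟩ := hv
  exact ⟨u, hu, huv.trans h⟩

lemma avail_not_mem {Adj : V → V → Prop} {C R : Set V} (hd : Disjoint R C) {v : V}
    (hv : v ∈ Avail Adj C R) : v ∉ C := by
  obtain ⟨u, hu, huv⟩ := hv
  rcases Relation.ReflTransGen.cases_tail huv with heq | ⟨c, _, hcb⟩
  · subst heq
    exact fun hvC => Set.disjoint_left.mp hd hu hvC
  · exact hcb.2.2

lemma avail_step {Adj : V → V → Prop} {C R : Set V} {x y : V}
    (hx : x ∈ Avail Adj C R) (hxy : Adj x y) (hxC : x ∉ C) (hyC : y ∉ C) :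
    y ∈ Avail Adj C R :=
  avail_trans hx (Relation.ReflTransGen.single ⟨hxy, hxC, hyC⟩)

/-! ### Strongly connected components -/

def scc (Adj : V → V → Prop) (C : Set V) (v : V) : Set V :=
  {w | w ∉ C ∧ ReachAvoid Adj C v w ∧ ReachAvoid Adj C w v}

lemma scc_isComponent {Adj : V → V → Prop} {C : Set V} {v : V} (hv : v ∉ C) :
    IsComponent Adj C (scc Adj C v) := by
  refine ⟨⟨v, hv, Relation.ReflTransGen.refl, Relation.ReflTransGen.refl⟩, ?_, ?_, ?_⟩
  · rw [Set.disjoint_left]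
    exact fun w hw => hw.1
  · rintro u ⟨_, _, huv⟩ w ⟨_, hvw, _⟩
    exact huv.trans hvw
  · rintro w hwC ⟨u, ⟨_, hvu, huv⟩, huw, hwu⟩
    exact ⟨hwC, hvu.trans huw, hwu.trans huv⟩

lemma scc_legal {Adj : V → V → Prop} {C R C' : Set V} {v : V} (hv : v ∉ C')
    (hreach : ∃ u ∈ R, ReachAvoid Adj (C ∩ C') u v) :
    LegalRobberMove Adj C R C' (scc Adj C' v) := by
  refine ⟨scc_isComponent hv, ?_⟩
  rintro w ⟨_, hvw, _⟩
  obtain ⟨u, hu, huv⟩ := hreach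
  exact ⟨u, hu, huv.trans (reachAvoid_mono Set.inter_subset_right hvw)⟩

/-! ### Plays -/

lemma consistent_mono {Adj : V → V → Prop} {σ : Set V → Set V → Set V}
    {p : ℕ → Set V × Set V} {m m' : ℕ}
    (h : ConsistentPrefix Adj σ p m') (hm : m ≤ m') : ConsistentPrefix Adj σ p m :=
  ⟨h.1, h.2.1, fun i hi => h.2.2 i (lt_of_lt_of_le hi hm)⟩

lemma consistent_isComponent {Adj : V → V → Prop} {σ : Set V → Set V → Set V}
    {p : ℕ → Set V × Set V} {m : ℕ} (h : ConsistentPrefix Adj σ p m) :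
    ∀ i ≤ m, IsComponent Adj (p i).1 (p i).2 := by
  intro i hi
  cases i with
  | zero => rw [h.1]; exact h.2.1
  | succ j => exact ((h.2.2 j (by omega)).2).1

/-! ### Splicing plays -/

def spl (q F : ℕ → Set V × Set V) (M : ℕ) : ℕ → Set V × Set V :=
  fun i => if i ≤ M then q i else F (i - M)

lemma spl_left {q F : ℕ → Set V × Set V} {M i : ℕ} (h : i ≤ M) :
    spl q F M i = q i := if_pos h

lemma spl_right {q F : ℕ → Set V × Set V} {M : ℕ} (h0 : F 0 = q M) {i : ℕ} (h : M ≤ i) :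
    spl q F M i = F (i - M) := by
  by_cases h' : i ≤ M
  · have hiM : i = M := le_antisymm h' h
    subst hiM
    simp [spl, h0]
  · exact if_neg h'

lemma splice {Adj : V → V → Prop} {σ : Set V → Set V → Set V}
    {q : ℕ → Set V × Set V} {M : ℕ}
    (hq : ConsistentPrefix Adj σ q M) (F : ℕ → Set V × Set V) (h0 : F 0 = q M) (N : ℕ)
    (hF : ∀ j < N, (F (j + 1)).1 = σ (F j).1 (F j).2 ∧
      LegalRobberMove Adj (F j).1 (F j).2 (F (j + 1)).1 (F (j + 1)).2) :
    ConsistentPrefix Adj σ (spl q F M) (M + N) := by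
  refine ⟨by rw [spl_left (Nat.zero_le M)]; exact hq.1,
          by rw [spl_left (Nat.zero_le M)]; exact hq.2.1, ?_⟩
  intro i hi
  by_cases hiM : i + 1 ≤ M
  · rw [spl_left hiM, spl_left (by omega)]
    exact hq.2.2 i (by omega)
  · have h1 : M ≤ i := by omega
    rw [spl_right h0 (by omega), spl_right h0 h1,
      show i + 1 - M = (i - M) + 1 by omega]
    exact hF (i - M) (by omega)

/-! ### The fast-forward (skipping) strategy -/

def IterPre (Adj : V → V → Prop) (σ : Set V → Set V → Set V) (C R : Set V) (s : ℕ)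
    (D S : ℕ → Set V) : Prop :=
  D 0 = C ∧ S 0 = R ∧ ∀ j < s, D (j + 1) = σ (D j) (S j) ∧
    LegalRobberMove Adj (D j) (S j) (D (j + 1)) (S (j + 1)) ∧
    Avail Adj (D (j + 1)) (S (j + 1)) = Avail Adj C R

def Iter (Adj : V → V → Prop) (σ : Set V → Set V → Set V) (C R : Set V) (s : ℕ)
    (D S : ℕ → Set V) : Prop :=
  IterPre Adj σ C R s D S ∧
    ∀ S', LegalRobberMove Adj (D s) (S s) (σ (D s) (S s)) S' →
      Avail Adj (σ (D s) (S s)) S' ≠ Avail Adj C R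

noncomputable def skipStrat (Adj : V → V → Prop) (σ : Set V → Set V → Set V)
    (C R : Set V) : Set V :=
  if h : ∃ t : ℕ × (ℕ → Set V) × (ℕ → Set V), Iter Adj σ C R t.1 t.2.1 t.2.2 then
    σ ((Classical.choose h).2.1 (Classical.choose h).1)
      ((Classical.choose h).2.2 (Classical.choose h).1)
  else σ C R

lemma skipStrat_eq_sigma (Adj : V → V → Prop) (σ : Set V → Set V → Set V) (C R : Set V) :
    ∃ a b, skipStrat Adj σ C R = σ a b := by
  unfold skipStrat
  split <;> exact ⟨_, _, rfl⟩

noncomputable def nextPos (Adj : V → V → Prop) (σ : Set V → Set V → Set V) (A : Set V) :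
    Set V × Set V → Set V × Set V := fun p =>
  if h2 : ∃ S', LegalRobberMove Adj p.1 p.2 (σ p.1 p.2) S' ∧
      Avail Adj (σ p.1 p.2) S' = A then
    (σ p.1 p.2, Classical.choose h2)
  else p

lemma nextPos_eq {Adj : V → V → Prop} {σ : Set V → Set V → Set V} {A : Set V}
    {p : Set V × Set V}
    (h2 : ∃ S', LegalRobberMove Adj p.1 p.2 (σ p.1 p.2) S' ∧
      Avail Adj (σ p.1 p.2) S' = A) :
    nextPos Adj σ A p = (σ p.1 p.2, Classical.choose h2) := dif_pos h2

/-! ### The "no escape" lemma -/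

lemma noEscape {Adj : V → V → Prop} {D0 S0 Ds Ss Ds1 : Set V}
    (hA0d : Disjoint S0 D0) (hAsd : Disjoint Ss Ds)
    (hA : Avail Adj Ds Ss = Avail Adj D0 S0)
    (hmono : ∀ S', LegalRobberMove Adj Ds Ss Ds1 S' →
      Avail Adj Ds1 S' ⊆ Avail Adj D0 S0) :
    Avail Adj (D0 ∩ Ds1) S0 ⊆ Avail Adj D0 S0 := by
  rintro v ⟨u, hu, huv⟩
  induction huv with
  | refl => exact mem_avail hu
  | @tail b c hub hbc ih =>
    obtain ⟨hadj, hbX, hcX⟩ := hbc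
    by_cases hc0 : c ∈ D0
    · -- c is a cop position of the starting round; the robber can settle on it
      -- at the final transition, so monotonicity puts it inside the old space.
      have hcDs1 : c ∉ Ds1 := fun hmem => hcX ⟨hc0, hmem⟩
      have hb : b ∈ Avail Adj Ds Ss := by rw [hA]; exact ih
      have hb' : b ∈ Avail Adj (Ds ∩ Ds1) Ss := by
        obtain ⟨u', hu', hp⟩ := hb
        exact ⟨u', hu', reachAvoid_mono Set.inter_subset_left hp⟩
      have hbDs : b ∉ Ds := avail_not_mem hAsd hb
      have hc' : c ∈ Avail Adj (Ds ∩ Ds1) Ss :=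
        avail_step hb' hadj (fun hmem => hbDs hmem.1) (fun hmem => hcDs1 hmem.2)
      have hlegal : LegalRobberMove Adj Ds Ss Ds1 (scc Adj Ds1 c) :=
        scc_legal hcDs1 hc'
      exact hmono _ hlegal
        (mem_avail ⟨hcDs1, Relation.ReflTransGen.refl, Relation.ReflTransGen.refl⟩)
    · have hb0 : b ∉ D0 := avail_not_mem hA0d ih
      exact avail_step ih hadj hb0 hc0

/-! ### Bounding strictly shrinking chains -/

lemma chain_bound [Fintype V] {Adj : V → V → Prop} {p : ℕ → Set V × Set V} {m : ℕ}
    (h : ∀ i < m, Avail Adj (p (i + 1)).1 (p (i + 1)).2 ⊂ Avail Adj (p i).1 (p i).2) :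
    m ≤ Fintype.card V := by
  have key : ∀ i, i ≤ m →
      i + (Avail Adj (p i).1 (p i).2).ncard ≤ (Avail Adj (p 0).1 (p 0).2).ncard := by
    intro i
    induction i with
    | zero => intro _; omega
    | succ n ihn =>
      intro hsucc
      have h1 := h n (by omega)
      have h2 : (Avail Adj (p (n + 1)).1 (p (n + 1)).2).ncard <
          (Avail Adj (p n).1 (p n).2).ncard :=
        Set.ncard_lt_ncard h1 (Set.toFinite _)
      have h3 := ihn (by omega)
      omega
  have h0 := key m le_rfl
  have hle : (Avail Adj (p 0).1 (p 0).2).ncard ≤ Fintype.card V := by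
    have := Set.ncard_le_ncard (Set.subset_univ (Avail Adj (p 0).1 (p 0).2))
      (Set.toFinite _)
    simpa [Set.ncard_univ, Nat.card_eq_fintype_card] using this
  omega


lemma step_key {V : Type} {Adj : V → V → Prop} {σ : Set V → Set V → Set V} {k : ℕ}
    (W : WinningCopStrategy Adj k σ)
    {q : ℕ → Set V × Set V} {M : ℕ} (hq : ConsistentPrefix Adj σ q M)
    {r : Set V}
    (hr : LegalRobberMove Adj (q M).1 (q M).2 (skipStrat Adj σ (q M).1 (q M).2) r) :
    (∃ q' M', ConsistentPrefix Adj σ q' M' ∧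
        q' M' = (skipStrat Adj σ (q M).1 (q M).2, r)) ∧
      Avail Adj (skipStrat Adj σ (q M).1 (q M).2) r ⊂ Avail Adj (q M).1 (q M).2 := by
  -- Step 1: the iteration terminates (otherwise an infinite σ-play exists)
  have hex : ∃ t : ℕ × (ℕ → Set V) × (ℕ → Set V),
      Iter Adj σ (q M).1 (q M).2 t.1 t.2.1 t.2.2 := by
    by_contra hne
    set A := Avail Adj (q M).1 (q M).2 with hAdef
    let F : ℕ → Set V × Set V := fun j => (nextPos Adj σ A)^[j] ((q M).1, (q M).2)
    have hstep : ∀ j, IterPre Adj σ (q M).1 (q M).2 j (fun i => (F i).1) (fun i => (F i).2) →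
        (F (j + 1)).1 = σ (F j).1 (F j).2 ∧
        LegalRobberMove Adj (F j).1 (F j).2 (F (j + 1)).1 (F (j + 1)).2 ∧
        Avail Adj (F (j + 1)).1 (F (j + 1)).2 = A := by
      intro j hpre
      have hnot : ¬ ∀ S', LegalRobberMove Adj (F j).1 (F j).2 (σ (F j).1 (F j).2) S' →
          Avail Adj (σ (F j).1 (F j).2) S' ≠ A :=
        fun hstop => hne ⟨(j, fun i => (F i).1, fun i => (F i).2), hpre, hstop⟩
      push_neg at hnot
      obtain ⟨S', hS'legal, hS'eq⟩ := hnot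
      have h2 : ∃ S', LegalRobberMove Adj (F j).1 (F j).2 (σ (F j).1 (F j).2) S' ∧
          Avail Adj (σ (F j).1 (F j).2) S' = A := ⟨S', hS'legal, hS'eq⟩
      have e : F (j + 1) = nextPos Adj σ A (F j) :=
        Function.iterate_succ_apply' (nextPos Adj σ A) j ((q M).1, (q M).2)
      rw [e, nextPos_eq h2]
      exact ⟨rfl, (Classical.choose_spec h2).1, (Classical.choose_spec h2).2⟩
    have hpre : ∀ j, IterPre Adj σ (q M).1 (q M).2 j
        (fun i => (F i).1) (fun i => (F i).2) := by
      intro j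
      induction j with
      | zero => exact ⟨rfl, rfl, fun i hi => absurd hi (Nat.not_lt_zero i)⟩
      | succ n ih =>
        have hn := hstep n ih
        obtain ⟨e1, e2, e3⟩ := ih
        refine ⟨e1, e2, fun i hi => ?_⟩
        rcases Nat.lt_succ_iff_lt_or_eq.mp hi with h' | h'
        · exact e3 i h'
        · subst h'
          exact hn
    have hxx : ∀ j, (F (j + 1)).1 = σ (F j).1 (F j).2 ∧
        LegalRobberMove Adj (F j).1 (F j).2 (F (j + 1)).1 (F (j + 1)).2 := by
      intro j
      have := hstep j (hpre j)
      exact ⟨this.1, this.2.1⟩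
    exact W.2.1 ⟨spl q F M, fun m =>
      consistent_mono (splice hq F rfl m (fun j _ => hxx j)) (by omega)⟩
  -- Step 2: unpack the chosen iteration
  set s := (Classical.choose hex).1 with hsdef
  set D := (Classical.choose hex).2.1 with hDdef
  set S := (Classical.choose hex).2.2 with hSdef
  have hIter : Iter Adj σ (q M).1 (q M).2 s D S := Classical.choose_spec hex
  have hskip : skipStrat Adj σ (q M).1 (q M).2 = σ (D s) (S s) := by
    unfold skipStrat
    rw [dif_pos hex]
  have hD0 : D 0 = (q M).1 := hIter.1.1
  have hS0 : S 0 = (q M).2 := hIter.1.2.1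
  have htriple := hIter.1.2.2
  have hstop := hIter.2
  have hcomp0 : IsComponent Adj (q M).1 (q M).2 := consistent_isComponent hq M le_rfl
  have hDS : ∀ j, j = s → IsComponent Adj (D j) (S j) ∧
      Avail Adj (D j) (S j) = Avail Adj (q M).1 (q M).2 := by
    intro j hj
    by_cases hs0 : j = 0
    · subst hs0
      rw [hD0, hS0]
      exact ⟨hcomp0, rfl⟩
    · have hlt : j - 1 < s := by omega
      have ht := htriple (j - 1) hlt
      rw [show j - 1 + 1 = j by omega] at ht
      exact ⟨ht.2.1.1, ht.2.2⟩
  have hcomps : IsComponent Adj (D s) (S s) := (hDS s rfl).1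
  have hAs : Avail Adj (D s) (S s) = Avail Adj (q M).1 (q M).2 := (hDS s rfl).2
  -- Step 3: the simulated σ-play up to (D s, S s)
  set F1 : ℕ → Set V × Set V := fun j => (D j, S j) with hF1def
  have h0F1 : F1 0 = q M := by
    show (D 0, S 0) = q M
    rw [hD0, hS0]
  have hq1 : ConsistentPrefix Adj σ (spl q F1 M) (M + s) :=
    splice hq F1 h0F1 s (fun j hj => ⟨(htriple j hj).1, (htriple j hj).2.1⟩)
  have hq1end : spl q F1 M (M + s) = (D s, S s) := by
    rw [spl_right h0F1 (by omega)]
    show F1 (M + s - M) = (D s, S s)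
    rw [show M + s - M = s by omega]
  -- Step 4: monotonicity of σ applied to any response at the last step
  have hmono : ∀ S', LegalRobberMove Adj (D s) (S s) (σ (D s) (S s)) S' →
      Avail Adj (σ (D s) (S s)) S' ⊆ Avail Adj (q M).1 (q M).2 := by
    intro S' hS'
    set F2 : ℕ → Set V × Set V :=
      fun j => if j = 0 then (D s, S s) else (σ (D s) (S s), S') with hF2def
    have h0F2 : F2 0 = spl q F1 M (M + s) := by
      rw [hq1end]; simp [hF2def]
    have hq2 : ConsistentPrefix Adj σ (spl (spl q F1 M) F2 (M + s)) (M + s + 1) := by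
      refine splice hq1 F2 h0F2 1 ?_
      intro j hj
      have hj0 : j = 0 := by omega
      subst hj0
      exact ⟨rfl, hS'⟩
    have hmst : MonotoneStep Adj (spl (spl q F1 M) F2 (M + s)) (M + s) :=
      W.2.2 _ _ hq2 (M + s) (by omega)
    have e1 : spl (spl q F1 M) F2 (M + s) (M + s + 1) = (σ (D s) (S s), S') := by
      rw [spl_right h0F2 (by omega)]
      show F2 (M + s + 1 - (M + s)) = _
      rw [show M + s + 1 - (M + s) = 1 by omega]
      simp [hF2def]
    have e2 : spl (spl q F1 M) F2 (M + s) (M + s) = (D s, S s) := by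
      rw [spl_left le_rfl, hq1end]
    unfold MonotoneStep at hmst
    rw [e1, e2] at hmst
    rw [← hAs]
    exact hmst
  -- Step 5: no escape: every legal response to the skipped move stays in the old space
  have hNE : Avail Adj ((q M).1 ∩ σ (D s) (S s)) (q M).2 ⊆ Avail Adj (q M).1 (q M).2 :=
    noEscape hcomp0.2.1 hcomps.2.1 hAs hmono
  rw [hskip] at hr
  have hrA : ∀ v ∈ r, v ∈ Avail Adj (q M).1 (q M).2 := fun v hv => hNE (hr.2 v hv)
  have hlegal_s : LegalRobberMove Adj (D s) (S s) (σ (D s) (S s)) r := by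
    refine ⟨hr.1, fun v hv => ?_⟩
    have hvA := hrA v hv
    rw [← hAs] at hvA
    obtain ⟨u, hu, hp⟩ := hvA
    exact ⟨u, hu, reachAvoid_mono Set.inter_subset_left hp⟩
  -- Step 6: conclude
  constructor
  · set F2 : ℕ → Set V × Set V :=
      fun j => if j = 0 then (D s, S s) else (σ (D s) (S s), r) with hF2def
    have h0F2 : F2 0 = spl q F1 M (M + s) := by
      rw [hq1end]; simp [hF2def]
    have hq2 : ConsistentPrefix Adj σ (spl (spl q F1 M) F2 (M + s)) (M + s + 1) := by
      refine splice hq1 F2 h0F2 1 ?_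
      intro j hj
      have hj0 : j = 0 := by omega
      subst hj0
      exact ⟨rfl, hlegal_s⟩
    refine ⟨spl (spl q F1 M) F2 (M + s), M + s + 1, hq2, ?_⟩
    rw [spl_right h0F2 (by omega)]
    show F2 (M + s + 1 - (M + s)) = _
    rw [show M + s + 1 - (M + s) = 1 by omega, hskip]
    simp [hF2def]
  · rw [hskip]
    exact (hmono r hlegal_s).ssubset_of_ne (hstop r hlegal_s)

lemma sim {V : Type} {Adj : V → V → Prop} {σ : Set V → Set V → Set V} {k : ℕ}
    (W : WinningCopStrategy Adj k σ) :
    ∀ m (p : ℕ → Set V × Set V), ConsistentPrefix Adj (skipStrat Adj σ) p m →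
      (∃ q M, ConsistentPrefix Adj σ q M ∧ q M = p m) ∧
      ∀ i < m, Avail Adj (p (i + 1)).1 (p (i + 1)).2 ⊂ Avail Adj (p i).1 (p i).2 := by
  intro m
  induction m with
  | zero =>
    intro p hp
    exact ⟨⟨p, 0, ⟨hp.1, hp.2.1, fun i hi => absurd hi (Nat.not_lt_zero i)⟩, rfl⟩,
      fun i hi => absurd hi (Nat.not_lt_zero i)⟩
  | succ n ih =>
    intro p hp
    obtain ⟨⟨q, M, hq, hend⟩, hstrict⟩ := ih p (consistent_mono hp (by omega))
    have hstep := hp.2.2 n (by omega)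
    rw [← hend] at hstep
    have hr := hstep.2
    rw [hstep.1] at hr
    obtain ⟨⟨q', M', hq', hend'⟩, hss⟩ := step_key W hq hr
    constructor
    · refine ⟨q', M', hq', ?_⟩
      rw [hend', ← hstep.1]
    · intro i hi
      rcases (by omega : i < n ∨ i = n) with h' | h'
      · exact hstrict i h'
      · subst h'
        rw [hstep.1, ← hend]
        exact hss


end ShrinkAux


/-- If `k` cops have a winning strategy on a digraph `G` with `n` vertices, then
they have a winning strategy in which the set of vertices unavailable to the
robber strictly grows in every round (i.e. the available set strictly shrinks);
consequently every play consistent with that strategy lasts at most `2n` rounds. -/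
theorem winning_strategy_strictly_shrinking {V : Type} [Fintype V]
    (Adj : V → V → Prop) (k : ℕ)
    (h : ∃ σ : Set V → Set V → Set V, WinningCopStrategy Adj k σ) :
    ∃ σ : Set V → Set V → Set V, WinningCopStrategy Adj k σ ∧
      (∀ p m, ConsistentPrefix Adj σ p m → ∀ i, i < m →
        Avail Adj (p (i + 1)).1 (p (i + 1)).2 ⊂ Avail Adj (p i).1 (p i).2) ∧
      (∀ p m, ConsistentPrefix Adj σ p m → m ≤ 2 * Fintype.card V) := by
  obtain ⟨σ, W⟩ := h
  refine ⟨ShrinkAux.skipStrat Adj σ, ⟨?_, ?_, ?_⟩, ?_, ?_⟩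
  · intro C R
    obtain ⟨a, b, e⟩ := ShrinkAux.skipStrat_eq_sigma Adj σ C R
    rw [e]
    exact W.1 a b
  · rintro ⟨p, hp⟩
    have hb := (ShrinkAux.sim W (Fintype.card V + 1) p (hp _)).2
    have := ShrinkAux.chain_bound hb
    omega
  · intro p m hpm i him
    exact ((ShrinkAux.sim W m p hpm).2 i him).subset
  · intro p m hpm i him
    exact (ShrinkAux.sim W m p hpm).2 i him
  · intro p m hpm
    have := ShrinkAux.chain_bound ((ShrinkAux.sim W m p hpm).2)
    omega
end

section
/- Define g : ℕ → ℕ by g(n) = 1 for n ≤ 4 and g(n) = (n − s + 1)·s + n + s + g(n − s − 1) for n ≥ 5, where s = ⌊n/log₂ n⌋. Then g(n) = O(n²); i.e., there is a constant C with g(n) ≤ C·n² for all n ≥ 1. -/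
/-- The vertex count of `G_n(s,t)` with `s(ℓ) = t(ℓ) = ⌊ℓ/log₂ ℓ⌋`:
`g(n) = 1` for `n ≤ 4` and
`g(n) = (n − s + 1)·s + n + s + g(n − s − 1)` for `n ≥ 5`, where `s = ⌊n/log₂ n⌋`. -/
noncomputable def vertexCountLog (n : ℕ) : ℕ :=
  if h : n ≤ 4 then 1
  else
    (n - ⌊(n : ℝ) / Real.logb 2 n⌋₊ + 1) * ⌊(n : ℝ) / Real.logb 2 n⌋₊ + n +
      ⌊(n : ℝ) / Real.logb 2 n⌋₊ + vertexCountLog (n - ⌊(n : ℝ) / Real.logb 2 n⌋₊ - 1)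
termination_by n
decreasing_by omega


lemma floor_le_half (n : ℕ) (hn : 5 ≤ n) : ⌊(n : ℝ) / Real.logb 2 n⌋₊ ≤ n / 2 := by
  have h4 : (4:ℝ) ≤ (n:ℝ) := by exact_mod_cast (by omega : 4 ≤ n)
  have hlog : (2:ℝ) ≤ Real.logb 2 n := by
    rw [Real.le_logb_iff_rpow_le (by norm_num) (by positivity)]
    rw [show ((2:ℝ):ℝ) = ((2:ℕ):ℝ) by norm_num, Real.rpow_natCast]
    norm_num; linarith
  have hdiv : (n:ℝ) / Real.logb 2 n ≤ (n:ℝ) / 2 := by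
    apply div_le_div_of_nonneg_left (by positivity) (by norm_num) hlog
  calc ⌊(n : ℝ) / Real.logb 2 n⌋₊ ≤ ⌊(n:ℝ)/2⌋₊ := Nat.floor_le_floor hdiv
    _ = n / 2 := by
        rw [show ((n:ℝ)/2) = (n:ℝ)/(2:ℕ) by norm_num, Nat.floor_div_natCast, Nat.floor_natCast]

lemma vertexCountLog_key : ∀ n : ℕ, 1 ≤ n → vertexCountLog n ≤ 3 * n ^ 2 := by
  intro n
  induction n using Nat.strong_induction_on with
  | _ n ih =>
    intro hn
    rw [vertexCountLog]
    split
    · nlinarith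
    · rename_i h
      set s := ⌊(n : ℝ) / Real.logb 2 n⌋₊ with hs
      have hn5 : 5 ≤ n := by omega
      have hsb : s ≤ n / 2 := floor_le_half n hn5
      have hrec := ih (n - s - 1) (by omega) (by omega)
      set m := n - s - 1 with hm
      have hnm : n = m + s + 1 := by omega
      have hsub : n - s + 1 = m + 2 := by omega
      rw [hsub]
      nlinarith [hrec, sq_nonneg m, sq_nonneg s]

/-- `g(n) = O(n²)`: there is a constant `C` with `g(n) ≤ C·n²` for all `n ≥ 1`. -/
theorem vertexCountLog_quadratic :
    ∃ C : ℕ, ∀ n : ℕ, 1 ≤ n → vertexCountLog n ≤ C * n ^ 2 := ⟨3, vertexCountLog_key⟩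
end
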